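/- arXiv:2503.17274 — 2 statements merged into one kernel-verified Lean document; each statement's English description precedes it below -/
import Mathlib

section
/- In a monoidal category W with associator α, for any objects A, B, C there is a natural isomorphism between the functors (T_{A,B} × 𝟭_{Over C}) ⋙ T_{A⊗B, C} ⋙ Over.map((α_{A,B,C}).hom) and the composite of the product-category associator (Over A × Over B) × Over C ≌ Over A × (Over B × Over C) with (𝟭_{Over A} × T_{B,C}) ⋙ T_{A, B⊗C}, whose component at ((h₁ : U₁ ⟶ A, h₂ : U₂ ⟶ B), h₃ : U₃ ⟶ C) is the isomorphism in Over (A ⊗ (B ⊗ C)) whose underlying morphism is (α_{U₁,U₂,U₃}).hom : (U₁ ⊗ U₂) ⊗ U₃ ⟶ U₁ ⊗ (U₂ ⊗ U₃). -/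
open CategoryTheory MonoidalCategory

/-- The tensoring functor `Over A × Over B ⥤ Over (A ⊗ B)`. -/
@[simps]
def overTensor {W : Type*} [Category W] [MonoidalCategory W] (A B : W) :
    Over A × Over B ⥤ Over (A ⊗ B) where
  obj X := Over.mk (X.1.hom ⊗ₘ X.2.hom)
  map {X Y} φ := Over.homMk (φ.1.left ⊗ₘ φ.2.left)
    (by dsimp; rw [tensorHom_comp_tensorHom, Over.w, Over.w])

def overTensorAssociator {W : Type*} [Category W] [MonoidalCategory W] (A B C : W) :
    (overTensor A B).prod (𝟭 (Over C)) ⋙ overTensor (A ⊗ B) C ⋙ Over.map (α_ A B C).hom ≅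
      prod.associator (Over A) (Over B) (Over C) ⋙ (𝟭 (Over A)).prod (overTensor B C) ⋙
        overTensor A (B ⊗ C) :=
  NatIso.ofComponents
    (fun X => Over.isoMk (α_ X.1.1.left X.1.2.left X.2.left) (associator_naturality _ _ _).symm)
    (fun f => Over.OverMorphism.ext (associator_naturality f.1.1.left f.1.2.left f.2.left))

/-- In a monoidal category `W` with associator `α`, the two ways of tensoring three slice
categories are naturally isomorphic, with components given by the associator. -/
theorem exists_over_tensor_associator_iso {W : Type*} [Category W] [MonoidalCategory W]
    (A B C : W) :
    ∃ e : ((overTensor A B).prod (𝟭 (Over C))) ⋙ overTensor (A ⊗ B) C ⋙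
          Over.map (α_ A B C).hom ≅
        CategoryTheory.prod.associator (Over A) (Over B) (Over C) ⋙
          ((𝟭 (Over A)).prod (overTensor B C)) ⋙ overTensor A (B ⊗ C),
      ∀ X : (Over A × Over B) × Over C,
        (e.hom.app X).left = (α_ X.1.1.left X.1.2.left X.2.left).hom :=
  ⟨overTensorAssociator A B C, fun _ => rfl⟩
end

section
/- For a partial order α, let TwIv α := {p : α × α // p.1 ≤ p.2} be the set of intervals ordered by inclusion of endpoints: ⟨a,b⟩ ⊑ ⟨c,d⟩ iff c ≤ a and b ≤ d; for a monotone map f : α → β let TwIv f : TwIv α → TwIv β be ⟨a,b⟩ ↦ ⟨f a, f b⟩. Then there is no family assigning to every partial order P (on types in a fixed universe) a monotone map η_P : P → TwIv P that is natural in monotone maps, i.e. such that for every monotone f : P → Q one has TwIv f ∘ η_P = η_Q ∘ f. -/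
/-- Intervals of a partial order, with the twisted (inclusion-of-endpoints) order:
`⟨a,b⟩ ⊑ ⟨c,d⟩` iff `c ≤ a` and `b ≤ d`. -/
def TwIv (α : Type*) [PartialOrder α] : Type _ := {p : α × α // p.1 ≤ p.2}

namespace TwIv

variable {α β : Type*} [PartialOrder α] [PartialOrder β]

instance : PartialOrder (TwIv α) where
  le x y := y.1.1 ≤ x.1.1 ∧ x.1.2 ≤ y.1.2
  le_refl x := ⟨le_refl _, le_refl _⟩
  le_trans x y z h h' := ⟨h'.1.trans h.1, h.2.trans h'.2⟩
  le_antisymm x y h h' :=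
    Subtype.ext (Prod.ext (le_antisymm h'.1 h.1) (le_antisymm h.2 h'.2))

/-- The action of the twisted interval functor on a monotone map. -/
def map (f : α → β) (hf : Monotone f) : TwIv α → TwIv β :=
  fun p => ⟨(f p.1.1, f p.1.2), hf p.2⟩

end TwIv

/-- There is no family of monotone unit maps `η_P : P → TwIv P`, defined for every partial
order `P`, that is natural with respect to all monotone maps. Hence the twisted interval
functor does not admit a monad unit. -/
theorem no_natural_unit_twIv :
    ¬ ∃ η : ∀ (P : Type) [PartialOrder P], P → TwIv P,
        (∀ (P : Type) [PartialOrder P], Monotone (η P)) ∧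
        (∀ (P Q : Type) [PartialOrder P] [PartialOrder Q]
          (f : P → Q) (hf : Monotone f), TwIv.map f hf ∘ η P = η Q ∘ f) := by
  rintro ⟨η, hmono, hnat⟩
  -- naturality against constant maps from Unit forces η P p = ⟨(p,p)⟩
  have key : ∀ (P : Type) [PartialOrder P] (p : P), η P p = ⟨(p, p), le_refl p⟩ := by
    intro P _ p
    have h := congrFun (hnat Unit P (fun _ => p) monotone_const) ()
    simp only [Function.comp] at h
    rw [← h]
    rfl
  have h := hmono Bool (show (false : Bool) ≤ true from Bool.false_le true)
  rw [key Bool false, key Bool true] at h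
  exact absurd h.1 (by decide)
end
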